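/- arXiv:2405.16327 — 7 statements merged into one kernel-verified Lean document; each statement's English description precedes it below -/
import Mathlib

section
/- For every θ ∈ (0, π) and natural number n ≥ 1, the quantity (n+1)·cos((n+1)θ)·sin(nθ) − n·cos(nθ)·sin((n+1)θ) is non-positive. -/
lemma abs_sin_nat_mul_le (m : ℕ) (x : ℝ) : |Real.sin (m * x)| ≤ m * |Real.sin x| := by
  induction m with
  | zero => simp
  | succ k ih =>
    have h : ((k : ℝ) + 1) * x = k * x + x := by ring
    push_cast
    rw [h, Real.sin_add]
    calc |Real.sin (k*x) * Real.cos x + Real.cos (k*x) * Real.sin x|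
        ≤ |Real.sin (k*x) * Real.cos x| + |Real.cos (k*x) * Real.sin x| := abs_add_le _ _
      _ ≤ |Real.sin (k*x)| * 1 + 1 * |Real.sin x| := by
          rw [abs_mul, abs_mul]
          gcongr <;> [exact Real.abs_cos_le_one x; exact Real.abs_cos_le_one _]
      _ ≤ (k : ℝ) * |Real.sin x| + 1 * |Real.sin x| := by
          rw [mul_one]; gcongr
      _ = ((k : ℝ) + 1) * |Real.sin x| := by ring

theorem denominator_nonpos (n : ℕ) (hn : 1 ≤ n) (θ : ℝ) (hθ : θ ∈ Set.Ioo 0 Real.pi) :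
    (n + 1) * Real.cos ((n + 1) * θ) * Real.sin (n * θ)
      - n * Real.cos (n * θ) * Real.sin ((n + 1) * θ) ≤ 0 := by
  obtain ⟨h0, hpi⟩ := hθ
  have hsθ : 0 ≤ Real.sin θ := Real.sin_nonneg_of_nonneg_of_le_pi h0.le hpi.le
  have key : ((n : ℝ) + 1) * Real.cos ((n + 1) * θ) * Real.sin (n * θ)
      - n * Real.cos (n * θ) * Real.sin ((n + 1) * θ)
      = (Real.sin ((2 * n + 1) * θ) - (2 * (n : ℝ) + 1) * Real.sin θ) / 2 := by
    have h1 : (2 * (n : ℝ) + 1) * θ = ((n : ℝ) + 1) * θ + (n : ℝ) * θ := by ring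
    have h2 := Real.sin_sub (((n : ℝ) + 1) * θ) ((n : ℝ) * θ)
    have h2' : ((n : ℝ) + 1) * θ - (n : ℝ) * θ = θ := by ring
    rw [h2'] at h2
    rw [h1, Real.sin_add, h2]
    ring
  rw [key]
  have h3 := abs_sin_nat_mul_le (2 * n + 1) θ
  have h4 : Real.sin ((2 * (n : ℝ) + 1) * θ) ≤ (2 * (n : ℝ) + 1) * Real.sin θ := by
    calc Real.sin ((2 * (n : ℝ) + 1) * θ) ≤ |Real.sin ((2 * (n : ℝ) + 1) * θ)| := le_abs_self _
      _ ≤ (2 * (n : ℝ) + 1) * |Real.sin θ| := by push_cast at h3; exact h3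
      _ = (2 * (n : ℝ) + 1) * Real.sin θ := by rw [abs_of_nonneg hsθ]
  push_cast
  linarith
end

section
/- Fix n ≥ 1 and let θ : ℝ → (0, π) be a differentiable function of k_V satisfying sin((n+1)θ(k_V)) + k_V·sin(n·θ(k_V)) = 0 with sin(n·θ(k_V)) ≠ 0. Then d/dk_V (1 − cos(θ(k_V))) > 0. -/
lemma abs_sin_mul_le (x : ℝ) (hs : 0 ≤ Real.sin x) :
    ∀ m : ℕ, |Real.sin (m * x)| ≤ m * Real.sin x := by
  intro m
  induction m with
  | zero => simp
  | succ j ih =>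
    have h : ((j : ℝ) + 1) * x = j * x + x := by ring
    rw [Nat.cast_succ, h, Real.sin_add]
    have a0 := abs_add_le (Real.sin (j*x) * Real.cos x) (Real.cos (j*x) * Real.sin x)
    have a1 : |Real.sin (j*x) * Real.cos x| ≤ |Real.sin (j*x)| := by
      rw [abs_mul]; exact mul_le_of_le_one_right (abs_nonneg _) (Real.abs_cos_le_one x)
    have a2 : |Real.cos (j*x) * Real.sin x| ≤ Real.sin x := by
      rw [abs_mul, abs_of_nonneg hs]
      exact mul_le_of_le_one_left hs (Real.abs_cos_le_one _)
    nlinarith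

lemma sin_mul_lt (x : ℝ) (hx : x ∈ Set.Ioo 0 Real.pi) (m : ℕ) (hm : 2 ≤ m) :
    Real.sin (m * x) < m * Real.sin x := by
  obtain ⟨j, rfl⟩ : ∃ j, m = j + 1 := ⟨m - 1, by omega⟩
  have hj : 1 ≤ j := by omega
  have hsx : 0 < Real.sin x := Real.sin_pos_of_pos_of_lt_pi hx.1 hx.2
  have hcx : |Real.cos x| < 1 := by
    rw [← sq_lt_one_iff_abs_lt_one]
    nlinarith [Real.sin_sq_add_cos_sq x]
  have habs := abs_sin_mul_le x hsx.le j
  have hjpos : (0:ℝ) < j := by exact_mod_cast hj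
  have h : ((j : ℝ) + 1) * x = j * x + x := by ring
  rw [Nat.cast_succ, h, Real.sin_add]
  have b1 : Real.sin (j*x) * Real.cos x ≤ |Real.sin (j*x)| * |Real.cos x| := by
    rw [← abs_mul]; exact le_abs_self _
  have b2 : Real.cos (j*x) * Real.sin x ≤ Real.sin x := by
    nlinarith [Real.cos_le_one ((j:ℝ)*x)]
  have b3 : |Real.sin (j*x)| * |Real.cos x| < j * Real.sin x := by
    have c1 : |Real.sin (j*x)| * |Real.cos x| ≤ (j * Real.sin x) * |Real.cos x| :=
      mul_le_mul_of_nonneg_right habs (abs_nonneg _)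
    have c2 : (j * Real.sin x) * |Real.cos x| < (j * Real.sin x) * 1 :=
      mul_lt_mul_of_pos_left hcx (by positivity)
    linarith
  linarith

theorem proposition1_strict (n : ℕ) (hn : 1 ≤ n) (θ : ℝ → ℝ)
    (hrange : ∀ k, θ k ∈ Set.Ioo 0 Real.pi)
    (hdiff : Differentiable ℝ θ)
    (heq : ∀ k : ℝ, Real.sin ((n + 1) * θ k) + k * Real.sin (n * θ k) = 0)
    (hsin : ∀ k : ℝ, Real.sin (n * θ k) ≠ 0) :
    ∀ k : ℝ, 0 < deriv (fun kV => 1 - Real.cos (θ kV)) k := by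
  intro k
  have hθ : HasDerivAt θ (deriv θ k) k := (hdiff k).hasDerivAt
  set D := deriv θ k with hD
  set t := θ k with ht
  -- derivative of the defining equation
  have g1 : HasDerivAt (fun x => Real.sin (((n:ℝ)+1) * θ x))
      (Real.cos (((n:ℝ)+1) * t) * (((n:ℝ)+1) * D)) k := (hθ.const_mul _).sin
  have g2 : HasDerivAt (fun x => Real.sin ((n:ℝ) * θ x))
      (Real.cos ((n:ℝ) * t) * ((n:ℝ) * D)) k := (hθ.const_mul _).sin
  have g3 : HasDerivAt (fun x : ℝ => x * Real.sin ((n:ℝ) * θ x))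
      (1 * Real.sin ((n:ℝ) * t) + k * (Real.cos ((n:ℝ) * t) * ((n:ℝ) * D))) k :=
    (hasDerivAt_id k).mul g2
  have gsum : HasDerivAt (fun x => Real.sin (((n:ℝ)+1) * θ x) + x * Real.sin ((n:ℝ) * θ x)) _ k :=
    g1.add g3
  have hfun : (fun x => Real.sin (((n:ℝ)+1) * θ x) + x * Real.sin ((n:ℝ) * θ x))
      = fun _ => (0:ℝ) := funext heq
  rw [hfun] at gsum
  have hE : Real.cos (((n:ℝ)+1) * t) * (((n:ℝ)+1) * D)
      + (1 * Real.sin ((n:ℝ) * t) + k * (Real.cos ((n:ℝ) * t) * ((n:ℝ) * D))) = 0 :=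
    gsum.unique (hasDerivAt_const k 0)
  -- derivative of the goal function
  have hgoal : HasDerivAt (fun kV => 1 - Real.cos (θ kV)) (Real.sin t * D) k := by
    have := hθ.cos.const_sub 1
    simpa using this
  rw [hgoal.deriv]
  -- abbreviations
  have hx := hrange k
  have hst : 0 < Real.sin t := Real.sin_pos_of_pos_of_lt_pi hx.1 hx.2
  have hsa : Real.sin ((n:ℝ) * t) ≠ 0 := hsin k
  have hk : Real.sin (((n:ℝ)+1) * t) + k * Real.sin ((n:ℝ) * t) = 0 := heq k
  set sa := Real.sin ((n:ℝ) * t) with hsadef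
  set ca := Real.cos ((n:ℝ) * t) with hcadef
  have hadd : ((n:ℝ)+1) * t = (n:ℝ) * t + t := by ring
  have hsin1 : Real.sin (((n:ℝ)+1) * t) = sa * Real.cos t + ca * Real.sin t := by
    rw [hadd, Real.sin_add]
  have hcos1 : Real.cos (((n:ℝ)+1) * t) = ca * Real.cos t - sa * Real.sin t := by
    rw [hadd, Real.cos_add]
  -- strict sine inequality for m = 2n+1
  have hstrict := sin_mul_lt t hx (2*n+1) (by omega)
  have hS : Real.sin (((2*n+1 : ℕ) : ℝ) * t)
      = sa * (ca * Real.cos t - sa * Real.sin t) + ca * (sa * Real.cos t + ca * Real.sin t) := by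
    have h2 : ((2*n+1 : ℕ) : ℝ) * t = (n:ℝ) * t + ((n:ℝ) * t + t) := by push_cast; ring
    rw [h2, Real.sin_add, Real.sin_add, Real.cos_add]
  rw [hS] at hstrict
  push_cast at hstrict
  have hpyth : sa^2 + ca^2 = 1 := Real.sin_sq_add_cos_sq _
  -- the key coefficient
  set C := ((n:ℝ)+1) * (ca * Real.cos t - sa * Real.sin t) * sa
      - (n:ℝ) * (sa * Real.cos t + ca * Real.sin t) * ca with hCdef
  have hCD : C * D = -(sa^2) := by
    rw [hsin1] at hk
    rw [hcos1] at hE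
    linear_combination sa * hE - ((n:ℝ) * ca * D) * hk
  have hC : C < 0 := by
    have hn' : (1:ℝ) ≤ n := by exact_mod_cast hn
    have hps : ((n:ℝ)) * Real.sin t * (sa^2 + ca^2) = (n:ℝ) * Real.sin t := by
      rw [hpyth]; ring
    nlinarith [hstrict, hps, hst]
  have hsa2 : 0 < sa^2 := by positivity
  have hDpos : 0 < D := by
    by_contra h
    push_neg at h
    nlinarith
  positivity
end

section
/- Let A be the (2n+1)×(2n+1) tridiagonal matrix with diagonal entries alternating (−R/L, −G/C, −R/L, …, −G/C, −R/L), superdiagonal entries alternating (−1/L, −1/C, −1/L, …), and subdiagonal entries alternating (1/C, 1/L, 1/C, …). Then λ = −R/L is an eigenvalue of A. -/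
/-- State matrix of a cascade of `n` π-sections (size `2n+1`), eq. (1) of the paper. -/
noncomputable def lineMatrix (R L G C : ℝ) (n : ℕ) : Matrix (Fin (2 * n + 1)) (Fin (2 * n + 1)) ℂ :=
  Matrix.of fun i j =>
    if (i : ℕ) = (j : ℕ) then
      (if (i : ℕ) % 2 = 0 then -((R : ℂ) / L) else -((G : ℂ) / C))
    else if (j : ℕ) = (i : ℕ) + 1 then
      (if (i : ℕ) % 2 = 0 then -(1 / (L : ℂ)) else -(1 / (C : ℂ)))
    else if (i : ℕ) = (j : ℕ) + 1 then
      (if (j : ℕ) % 2 = 0 then 1 / (C : ℂ) else 1 / (L : ℂ))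
    else 0

/-- `P_n(μ) = (1/(LC))^n U_n((1/2)LCμ + 1)`. -/
noncomputable def Pseq (L C : ℝ) (n : ℕ) (μ : ℂ) : ℂ :=
  (1 / ((L : ℂ) * C)) ^ n *
    (Polynomial.Chebyshev.U ℂ (n : ℤ)).eval ((1 / 2 : ℂ) * L * C * μ + 1)

/-- `g(λ) = (λ + R/L)(λ + G/C)`. -/
noncomputable def gfun (R L G C : ℝ) (lam : ℂ) : ℂ := (lam + R / L) * (lam + G / C)

theorem neg_RL_is_eigenvalue (R L G C : ℝ) (hR : 0 < R) (hL : 0 < L) (hG : 0 < G)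
    (hC : 0 < C) (n : ℕ) :
    ∃ v : Fin (2 * n + 1) → ℂ, v ≠ 0 ∧
      (lineMatrix R L G C n).mulVec v = (-(R : ℂ) / L) • v := by
  refine ⟨fun j => if (j : ℕ) % 2 = 0 then 1 else 0, ?_, ?_⟩
  · intro h
    have h0 := congrFun h ⟨0, by omega⟩
    simp at h0
  · funext i
    simp only [Matrix.mulVec, dotProduct, Pi.smul_apply, smul_eq_mul]
    rcases Nat.mod_two_eq_zero_or_one (i : ℕ) with hi | hi
    · -- even row: sum has a single nonzero term, at j = i
      have key : ∀ j : Fin (2 * n + 1),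
          lineMatrix R L G C n i j * (if (j : ℕ) % 2 = 0 then (1:ℂ) else 0)
            = if j = i then -((R : ℂ) / L) else 0 := by
        intro j
        simp only [lineMatrix, Matrix.of_apply, Fin.ext_iff]
        rcases Nat.mod_two_eq_zero_or_one (j : ℕ) with hj | hj <;>
          split_ifs <;> first | omega | ring1
      rw [Finset.sum_congr rfl (fun j _ => key j)]
      simp [hi, div_eq_mul_inv, neg_mul]
    · -- odd row: two nonzero terms, at j = i-1 and j = i+1, which cancel
      have hlt : (i : ℕ) < 2 * n := by
        have := i.isLt; omega
      have hge : 1 ≤ (i : ℕ) := by omega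
      set a : Fin (2 * n + 1) := ⟨(i : ℕ) - 1, by omega⟩ with ha
      set b : Fin (2 * n + 1) := ⟨(i : ℕ) + 1, by omega⟩ with hb
      have key : ∀ j : Fin (2 * n + 1),
          lineMatrix R L G C n i j * (if (j : ℕ) % 2 = 0 then (1:ℂ) else 0)
            = (if j = b then -(1 / (C : ℂ)) else 0) + (if j = a then 1 / (C : ℂ) else 0) := by
        intro j
        simp only [lineMatrix, Matrix.of_apply, Fin.ext_iff, ha, hb, Fin.val_mk]
        rcases Nat.mod_two_eq_zero_or_one (j : ℕ) with hj | hj <;>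
          split_ifs <;> first | omega | ring1
      rw [Finset.sum_congr rfl (fun j _ => key j)]
      rw [Finset.sum_add_distrib]
      simp [hi]
end

section
/- Let A be the (2n+1)×(2n+1) state matrix of the cascaded π-section line as above. The characteristic polynomial of A equals (λ + R/L)·(1/(LC))ⁿ·U_n((1/2)LC·(λ+R/L)(λ+G/C) + 1), where U_n is the Chebyshev polynomial of the second kind of degree n. -/
open Matrix Polynomial Polynomial.Chebyshev

/-- General complex tridiagonal matrix with diagonal `d`, superdiagonal `u`, subdiagonal `l`. -/
noncomputable def tri (d u l : ℕ → ℂ) (m : ℕ) : Matrix (Fin m) (Fin m) ℂ :=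
  Matrix.of fun i j =>
    if (i : ℕ) = (j : ℕ) then d i
    else if (j : ℕ) = (i : ℕ) + 1 then u i
    else if (i : ℕ) = (j : ℕ) + 1 then l j
    else 0

lemma tri_shift (d u l : ℕ → ℂ) (m : ℕ) :
    (tri d u l (m + 1)).submatrix Fin.succ Fin.succ =
      tri (fun k => d (k + 1)) (fun k => u (k + 1)) (fun k => l (k + 1)) m := by
  ext i j
  simp only [tri, Matrix.submatrix_apply, Matrix.of_apply, Fin.val_succ, add_left_inj]

lemma det_tri_rec (d u l : ℕ → ℂ) (m : ℕ) :
    (tri d u l (m + 2)).det =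
      d 0 * (tri (fun k => d (k + 1)) (fun k => u (k + 1)) (fun k => l (k + 1)) (m + 1)).det
        - u 0 * l 0 *
          (tri (fun k => d (k + 2)) (fun k => u (k + 2)) (fun k => l (k + 2)) m).det := by
  set M := tri d u l (m + 2) with hM
  rw [Matrix.det_succ_row_zero, Fin.sum_univ_succ, Fin.sum_univ_succ]
  have h0 : M 0 0 = d 0 := by simp [hM, tri]
  have h1 : M 0 (Fin.succ 0) = u 0 := by simp [hM, tri]
  have htail : ∀ j : Fin m, M 0 (Fin.succ (Fin.succ j)) = 0 := by
    intro j; simp [hM, tri, Fin.val_succ]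
  have hsub0 : M.submatrix Fin.succ ((0 : Fin (m + 2)).succAbove) =
      tri (fun k => d (k + 1)) (fun k => u (k + 1)) (fun k => l (k + 1)) (m + 1) := by
    rw [Fin.succAbove_zero, ← tri_shift]
  set B := M.submatrix Fin.succ ((Fin.succ 0 : Fin (m + 2)).succAbove) with hB
  have hdetB : B.det = l 0 *
      (tri (fun k => d (k + 2)) (fun k => u (k + 2)) (fun k => l (k + 2)) m).det := by
    rw [Matrix.det_succ_column_zero, Fin.sum_univ_succ]
    have hB00 : B 0 0 = l 0 := by
      simp [hB, hM, tri, Fin.succ_succAbove_zero]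
    have hBtail : ∀ i : Fin m, B (Fin.succ i) 0 = 0 := by
      intro i
      simp [hB, hM, tri, Fin.succ_succAbove_zero, Fin.val_succ]
    have hBsub : B.submatrix ((0 : Fin (m + 1)).succAbove) Fin.succ =
        tri (fun k => d (k + 2)) (fun k => u (k + 2)) (fun k => l (k + 2)) m := by
      ext i j
      have hcol : (Fin.succ 0 : Fin (m + 2)).succAbove (Fin.succ j) = Fin.succ (Fin.succ j) := by
        rw [Fin.succ_succAbove_succ, Fin.succAbove_zero]
      simp only [hB, hM, Fin.succAbove_zero, Matrix.submatrix_apply, hcol, tri,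
        Matrix.of_apply, Fin.val_succ, add_left_inj]
    simp only [hB00, hBtail, hBsub, Fin.val_zero, pow_zero, one_mul, mul_zero, zero_mul,
      Finset.sum_const_zero, add_zero]
  simp only [htail, mul_zero, zero_mul, Finset.sum_const_zero, add_zero, h0, h1, hsub0, hdetB,
    Fin.val_zero, Fin.val_succ, pow_zero, pow_one, one_mul]
  ring

lemma det_tri_formula (e x : ℂ) (n : ℕ) :
    ∀ d u l : ℕ → ℂ,
      (∀ k, d (k + 2) = d k) → (∀ k, d k * d (k + 1) = 2 * e * (x - 1)) →
      (∀ k, u k * l k = -e) →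
      (tri d u l (2 * n)).det =
          e ^ n * ((U ℂ (n : ℤ)).eval x - (U ℂ ((n : ℤ) - 1)).eval x) ∧
      (tri d u l (2 * n + 1)).det = d 0 * e ^ n * (U ℂ (n : ℤ)).eval x := by
  induction n with
  | zero =>
    intro d u l _ _ _
    constructor
    · simp [Matrix.det_fin_zero]
    · simp [Matrix.det_fin_one, tri]
  | succ n ih =>
    have hcheb : (U ℂ ((n : ℤ) + 1)).eval x =
        2 * x * (U ℂ (n : ℤ)).eval x - (U ℂ ((n : ℤ) - 1)).eval x := by
      rw [Polynomial.Chebyshev.U_add_one]; simp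
    have heven : ∀ d u l : ℕ → ℂ,
        (∀ k, d (k + 2) = d k) → (∀ k, d k * d (k + 1) = 2 * e * (x - 1)) →
        (∀ k, u k * l k = -e) →
        (tri d u l (2 * (n + 1))).det =
          e ^ (n + 1) *
            ((U ℂ ((n : ℤ) + 1)).eval x - (U ℂ (n : ℤ)).eval x) := by
      intro d u l hper hprod hul
      rw [show 2 * (n + 1) = 2 * n + 2 from by ring, det_tri_rec]
      have h1 := (ih (fun k => d (k + 1)) (fun k => u (k + 1)) (fun k => l (k + 1))
        (fun k => hper (k + 1)) (fun k => hprod (k + 1)) (fun k => hul (k + 1))).2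
      have h2 := (ih (fun k => d (k + 2)) (fun k => u (k + 2)) (fun k => l (k + 2))
        (fun k => hper (k + 2)) (fun k => hprod (k + 2)) (fun k => hul (k + 2))).1
      rw [h1, h2, hcheb]
      have hp := hprod 0
      have hu := hul 0
      simp only [zero_add] at hp hu ⊢
      rw [hu]
      ring_nf
      linear_combination (e ^ n * (U ℂ (n : ℤ)).eval x) * hp
    intro d u l hper hprod hul
    constructor
    · have h := heven d u l hper hprod hul
      rw [h]
      norm_num
    · rw [show 2 * (n + 1) + 1 = (2 * n + 1) + 2 from by ring, det_tri_rec]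
      have h1 := heven (fun k => d (k + 1)) (fun k => u (k + 1)) (fun k => l (k + 1))
        (fun k => hper (k + 1)) (fun k => hprod (k + 1)) (fun k => hul (k + 1))
      rw [show 2 * (n + 1) = 2 * n + 1 + 1 from by ring] at h1
      rw [h1]
      have h2 := (ih (fun k => d (k + 2)) (fun k => u (k + 2)) (fun k => l (k + 2))
        (fun k => hper (k + 2)) (fun k => hprod (k + 2)) (fun k => hul (k + 2))).2
      rw [h2]
      have hu := hul 0
      have hd := hper 0
      simp only [zero_add] at hu hd
      rw [hu, hd]
      push_cast
      ring

theorem charpoly_lineMatrix (R L G C : ℝ) (hR : 0 < R) (hL : 0 < L) (hG : 0 < G)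
    (hC : 0 < C) (n : ℕ) (lam : ℂ) :
    (lineMatrix R L G C n).charpoly.eval lam =
      (lam + R / L) * (1 / ((L : ℂ) * C)) ^ n *
        (Polynomial.Chebyshev.U ℂ (n : ℤ)).eval
          ((1 / 2 : ℂ) * L * C * (lam + R / L) * (lam + G / C) + 1) := by
  have hL0 : (L : ℂ) ≠ 0 := by exact_mod_cast hL.ne'
  have hC0 : (C : ℂ) ≠ 0 := by exact_mod_cast hC.ne'
  set x : ℂ := (1 / 2 : ℂ) * L * C * (lam + R / L) * (lam + G / C) + 1 with hx
  set e : ℂ := 1 / ((L : ℂ) * C) with he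
  set d : ℕ → ℂ := fun k => if k % 2 = 0 then lam + (R : ℂ) / L else lam + (G : ℂ) / C with hd
  set u : ℕ → ℂ := fun k => if k % 2 = 0 then 1 / (L : ℂ) else 1 / (C : ℂ) with hu
  set l : ℕ → ℂ := fun k => if k % 2 = 0 then -(1 / (C : ℂ)) else -(1 / (L : ℂ)) with hl
  have key : (lineMatrix R L G C n).charpoly.eval lam = (tri d u l (2 * n + 1)).det := by
    rw [Matrix.charpoly, ← Polynomial.coe_evalRingHom, RingHom.map_det]
    congr 1
    rw [RingHom.mapMatrix_apply]
    ext i j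
    by_cases hij : i = j
    · subst hij
      rw [Matrix.map_apply, Matrix.charmatrix_apply_eq]
      simp only [tri, lineMatrix, hd, hu, hl, Matrix.of_apply, Polynomial.coe_evalRingHom,
        Polynomial.eval_sub, Polynomial.eval_X, Polynomial.eval_C, if_pos rfl]
      split_ifs <;> ring
    · rw [Matrix.map_apply, Matrix.charmatrix_apply_ne _ _ _ hij]
      have hval : (i : ℕ) ≠ (j : ℕ) := fun h => hij (Fin.ext h)
      simp only [tri, lineMatrix, hd, hu, hl, Matrix.of_apply, Polynomial.coe_evalRingHom,
        Polynomial.eval_neg, Polynomial.eval_C, if_neg hval]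
      split_ifs <;> ring
  rw [key]
  have hper : ∀ k, d (k + 2) = d k := by
    intro k; simp [hd, Nat.add_mod_right]
  have hprod : ∀ k, d k * d (k + 1) = 2 * e * (x - 1) := by
    intro k
    rcases Nat.mod_two_eq_zero_or_one k with h | h
    · have h1 : (k + 1) % 2 = 1 := by omega
      simp only [hd, h, h1, if_pos rfl, if_neg one_ne_zero, reduceIte]
      rw [hx, he]; field_simp; ring
    · have h1 : (k + 1) % 2 = 0 := by omega
      simp only [hd, h, h1, if_pos rfl, if_neg one_ne_zero, reduceIte]
      rw [hx, he]; field_simp; ring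
  have hul : ∀ k, u k * l k = -e := by
    intro k
    rcases Nat.mod_two_eq_zero_or_one k with h | h <;>
      simp only [hu, hl, he, h, if_pos rfl, if_neg one_ne_zero, reduceIte] <;>
      · (field_simp; try ring)
  have := (det_tri_formula e x n d u l hper hprod hul).2
  rw [this]
  simp [hd]
end

section
/- Let A be the (2n+1)×(2n+1) state matrix of the cascaded π-section line. A complex number λ ≠ −R/L is an eigenvalue of A if and only if there exists k ∈ {1,…,n} such that (1/2)LC·(λ+R/L)(λ+G/C) + 1 = cos(kπ/(n+1)). -/
open Polynomial Polynomial.Chebyshev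

noncomputable def Uev (x : ℂ) (m : ℤ) : ℂ := (U ℂ m).eval x

lemma Uev_add_one (x : ℂ) (m : ℤ) : Uev x (m+1) = 2*x*Uev x m - Uev x (m-1) := by
  simp [Uev, U_add_one, eval_mul, eval_sub]

lemma Uev_zero (x : ℂ) : Uev x 0 = 1 := by simp [Uev]
lemma Uev_neg_one (x : ℂ) : Uev x (-1) = 0 := by simp [Uev, U_neg_one]

lemma Uev_one_val (n : ℕ) : Uev 1 n = n + 1 := by
  induction n using Nat.twoStepInduction with
  | zero => simp [Uev]
  | one => simp [Uev, U_one]; norm_num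
  | more n ih1 ih2 =>
    rw [show ((n+2:ℕ):ℤ) = ((n+1:ℕ):ℤ)+1 by push_cast; ring, Uev_add_one,
      show ((n+1:ℕ):ℤ)-1 = ((n:ℕ):ℤ) by push_cast; ring, ih1, ih2]
    push_cast; ring

lemma Uev_neg_one_val (n : ℕ) : Uev (-1) n = (-1)^n * (n + 1) := by
  induction n using Nat.twoStepInduction with
  | zero => simp [Uev]
  | one => simp [Uev, U_one]; norm_num
  | more n ih1 ih2 =>
    rw [show ((n+2:ℕ):ℤ) = ((n+1:ℕ):ℤ)+1 by push_cast; ring, Uev_add_one,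
      show ((n+1:ℕ):ℤ)-1 = ((n:ℕ):ℤ) by push_cast; ring, ih1, ih2]
    push_cast; ring

open Real in
lemma cos_reduce (n : ℕ) (m : ℤ) (hnd : ¬ ((n+1:ℤ) ∣ m)) :
    ∃ k ∈ Finset.Icc 1 n, Real.cos (m*π/(n+1)) = Real.cos (k*π/(n+1)) := by
  have hn1 : ((n:ℝ)+1) ≠ 0 := by positivity
  set N : ℤ := 2*(n+1) with hN
  have hNpos : 0 < N := by positivity
  set r : ℤ := m % N with hr
  have hr0 : 0 ≤ r := Int.emod_nonneg m (by omega)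
  have hrN : r < N := Int.emod_lt_of_pos m hNpos
  obtain ⟨q, hq⟩ : ∃ q, m = N*q + r := ⟨m / N, (Int.mul_ediv_add_emod m N).symm⟩
  clear_value r
  clear hr
  set r2 : ℕ := r.toNat with hr2
  have hrr' : r = (r2 : ℤ) := (Int.toNat_of_nonneg hr0).symm
  have hdr' : ¬ ((n+1) ∣ r2) := by
    rintro ⟨c, hc⟩
    refine hnd ⟨2*q + c, ?_⟩
    have hcz : r = ((n:ℤ)+1)*(c:ℤ) := by rw [hrr']; exact_mod_cast hc
    rw [hq, hcz, hN]; ring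
  have hcos : Real.cos (m*π/(n+1)) = Real.cos (r2*π/(n+1)) := by
    rw [show (m:ℝ)*π/(n+1) = r2*π/(n+1) + q * (2*π) by
      rw [hq, hrr']; push_cast [hN]; field_simp; ring]
    exact Real.cos_add_int_mul_two_pi _ _
  have hub : r2 ≤ 2*n+1 := by omega
  have hr'0 : r2 ≠ 0 := fun h => hdr' (by simp [h])
  rcases le_or_gt r2 n with hle | hgt
  · exact ⟨r2, Finset.mem_Icc.2 ⟨by omega, hle⟩, hcos⟩
  · have hne : r2 ≠ n+1 := fun h => hdr' (h ▸ dvd_refl _)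
    refine ⟨2*(n+1) - r2, Finset.mem_Icc.2 ⟨by omega, by omega⟩, ?_⟩
    rw [hcos]
    have hk : ((2*(n+1) - r2 : ℕ) : ℝ) = 2*((n:ℝ)+1) - (r2 : ℝ) := by
      push_cast [Nat.cast_sub (by omega : r2 ≤ 2*(n+1))]; ring
    rw [show ((2*(n+1) - r2 : ℕ) : ℝ)*π/(n+1) = 2*π - r2*π/(n+1) by
      rw [hk]; field_simp]
    rw [Real.cos_two_pi_sub]

lemma Uev_eq_zero_iff (n : ℕ) (x : ℂ) :
    Uev x n = 0 ↔ ∃ k ∈ Finset.Icc 1 n, x = (Real.cos (k * Real.pi / (n+1)) : ℂ) := by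
  have hn1 : ((n:ℝ)+1) ≠ 0 := by positivity
  have hnc : ((n:ℂ)+1) ≠ 0 := by exact_mod_cast Complex.ofReal_ne_zero.2 hn1
  constructor
  · intro h
    obtain ⟨θ, hθ⟩ := Complex.cos_surjective x
    have h2 := U_complex_cos θ (n : ℤ)
    rw [hθ, show (U ℂ (n:ℤ)).eval x = Uev x n from rfl, h, zero_mul] at h2
    obtain ⟨m, hm⟩ := Complex.sin_eq_zero_iff.1 h2.symm
    push_cast at hm
    have hθeq : θ = (m:ℂ) * (Real.pi:ℂ) / ((n:ℂ)+1) := by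
      rw [eq_div_iff hnc]; linear_combination hm
    have hx : x = ((Real.cos ((m:ℝ)*Real.pi/((n:ℝ)+1)) : ℝ) : ℂ) := by
      rw [← hθ, hθeq, Complex.ofReal_cos]
      congr 1
      push_cast; ring
    by_cases hd : ((n:ℤ)+1) ∣ m
    · exfalso
      obtain ⟨j, rfl⟩ := hd
      have harg : ((((n:ℤ)+1)*j : ℤ):ℝ)*Real.pi/((n:ℝ)+1) = (j:ℝ)*Real.pi := by
        push_cast; field_simp
      rw [show ((((n:ℤ)+1)*j : ℤ):ℝ) = (((n:ℤ)+1 :ℤ):ℝ)*(j:ℝ) by push_cast; ring] at hx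
      rw [show (((n:ℤ)+1 :ℤ):ℝ)*(j:ℝ)*Real.pi/((n:ℝ)+1) = (j:ℝ)*Real.pi by push_cast; field_simp] at hx
      rcases Int.even_or_odd j with ⟨c, hc⟩ | ⟨c, hc⟩
      · have : Real.cos ((j:ℝ)*Real.pi) = 1 := by
          rw [show (j:ℝ)*Real.pi = (c:ℝ)*(2*Real.pi) by rw [hc]; push_cast; ring]
          exact Real.cos_int_mul_two_pi c
        rw [this] at hx
        rw [hx] at h
        simp only [Complex.ofReal_one] at h
        rw [Uev_one_val] at h
        exact hnc h
      · have : Real.cos ((j:ℝ)*Real.pi) = -1 := by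
          rw [show (j:ℝ)*Real.pi = Real.pi + (c:ℝ)*(2*Real.pi) by rw [hc]; push_cast; ring]
          rw [Real.cos_add_int_mul_two_pi, Real.cos_pi]
        rw [this] at hx
        rw [hx] at h
        push_cast at h
        rw [Uev_neg_one_val] at h
        rcases mul_eq_zero.1 h with h' | h'
        · exact pow_ne_zero n (by norm_num : (-1:ℂ) ≠ 0) h'
        · exact hnc h'
    · obtain ⟨k, hk, hck⟩ := cos_reduce n m hd
      exact ⟨k, hk, by rw [hx, hck]⟩
  · rintro ⟨k, hk, rfl⟩
    obtain ⟨hk1, hk2⟩ := Finset.mem_Icc.1 hk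
    have h2 := U_complex_cos ((k * Real.pi / (n+1) : ℝ) : ℂ) (n : ℤ)
    rw [← Complex.ofReal_cos] at h2
    have hang : (((n:ℤ):ℂ)+1) * ((k * Real.pi / (n+1) : ℝ) : ℂ) = ((k*Real.pi : ℝ) : ℂ) := by
      push_cast
      field_simp
    rw [hang] at h2
    have hz : Complex.sin ((k*Real.pi : ℝ) : ℂ) = 0 := by
      rw [← Complex.ofReal_sin]
      exact_mod_cast Real.sin_nat_mul_pi k
    have hsz : Complex.sin ((k * Real.pi / (n+1) : ℝ) : ℂ) ≠ 0 := by
      rw [← Complex.ofReal_sin]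
      have : 0 < Real.sin (k * Real.pi / (n+1)) := by
        apply Real.sin_pos_of_pos_of_lt_pi
        · positivity
        · rw [div_lt_iff₀ (by positivity)]
          have : (k:ℝ) < (n:ℝ)+1 := by exact_mod_cast Nat.lt_succ_of_le hk2
          nlinarith [Real.pi_pos]
      exact_mod_cast this.ne'
    have := mul_eq_zero.1 (hz ▸ h2)
    simp only [Uev]
    tauto

lemma Uev_cast_succ (x : ℂ) (t : ℕ) :
    Uev x ((t+1:ℕ):ℤ) = 2*x*Uev x t - Uev x ((t:ℤ)-1) := by
  rw [show ((t+1:ℕ):ℤ) = (t:ℤ)+1 by push_cast; ring, Uev_add_one]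

noncomputable def useq (α x : ℂ) (i : ℕ) : ℂ :=
  if i % 2 = 0 then Uev x ((i/2 : ℕ) : ℤ) - Uev x (((i/2 : ℕ) : ℤ) - 1) else -α * Uev x ((i/2 : ℕ) : ℤ)

lemma useq_even (α x : ℂ) (t : ℕ) :
    useq α x (2*t) = Uev x t - Uev x ((t:ℤ)-1) := by
  have h1 : (2*t) % 2 = 0 := by omega
  have h2 : (2*t)/2 = t := by omega
  simp [useq, h1, h2]

lemma useq_odd (α x : ℂ) (t : ℕ) :
    useq α x (2*t+1) = -α * Uev x t := by
  have h1 : ¬ ((2*t+1) % 2 = 0) := by omega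
  have h2 : (2*t+1)/2 = t := by omega
  simp [useq, h1, h2]

lemma useq_zero (α x : ℂ) : useq α x 0 = 1 := by
  have := useq_even α x 0
  simpa [Uev_zero, Uev_neg_one] using this

lemma useq_one (α x : ℂ) : useq α x 1 = -α := by
  have := useq_odd α x 0
  simpa [Uev_zero] using this

lemma useq_rec_even (α β x : ℂ) (hx : α*β = 2*x-2) (t : ℕ) :
    useq α x (2*t+2) = useq α x (2*t) - β * useq α x (2*t+1) := by
  rw [show 2*t+2 = 2*(t+1) by ring, useq_even, useq_even, useq_odd,
    Uev_cast_succ, show ((t+1:ℕ):ℤ)-1 = (t:ℤ) by push_cast; ring]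
  linear_combination (-(Uev x t)) * hx

lemma useq_rec_odd (α x : ℂ) (t : ℕ) :
    useq α x (2*t+3) = useq α x (2*t+1) - α * useq α x (2*t+2) := by
  rw [show 2*t+3 = 2*(t+1)+1 by ring, show 2*t+2 = 2*(t+1) by ring,
    useq_odd, useq_odd, useq_even,
    show ((t+1:ℕ):ℤ)-1 = (t:ℤ) by push_cast; ring]
  ring

lemma row_solve (K D : ℝ) (hK : (K:ℂ) ≠ 0) (a b c lam : ℂ) :
    (1/(K:ℂ)) * a + (-((D:ℂ)/K)) * b + (-(1/(K:ℂ))) * c = lam * b ↔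
      c = a - ((K:ℂ)*lam + D) * b := by
  rw [← sub_eq_zero, ← sub_eq_zero (a := c)]
  constructor <;> intro h
  · field_simp at h
    linear_combination -h
  · field_simp at h ⊢
    linear_combination -h

lemma row_last (K D : ℝ) (hK : (K:ℂ) ≠ 0) (a b lam : ℂ) :
    (1/(K:ℂ)) * a + (-((D:ℂ)/K)) * b + 0 = lam * b ↔ a = ((K:ℂ)*lam + D) * b := by
  rw [← sub_eq_zero, ← sub_eq_zero (a := a)]
  constructor <;> intro h
  · field_simp at h
    linear_combination h
  · field_simp at h ⊢
    linear_combination h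

lemma row_first (K D : ℝ) (hK : (K:ℂ) ≠ 0) (b c lam : ℂ) :
    0 + (-((D:ℂ)/K)) * b + (-(1/(K:ℂ))) * c = lam * b ↔ c = -((K:ℂ)*lam + D) * b := by
  rw [show (0 + (-((D:ℂ)/K)) * b + (-(1/(K:ℂ))) * c) = (1/(K:ℂ)) * 0 + (-((D:ℂ)/K)) * b + (-(1/(K:ℂ))) * c by ring,
    row_solve K D hK 0 b c lam]
  constructor <;> intro h <;> [linear_combination h; linear_combination h]

lemma vcongr {N : ℕ} (v : Fin N → ℂ) {a : ℕ} (b : ℕ) {ha : a < N} (hb : b < N)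
    (hab : a = b) : v ⟨a, ha⟩ = v ⟨b, hb⟩ := by subst hab; rfl

lemma lineMatrix_mulVec (R L G C : ℝ) (n : ℕ) (v : Fin (2*n+1) → ℂ) (i : Fin (2*n+1)) :
    (lineMatrix R L G C n).mulVec v i =
      (if h : 0 < (i:ℕ) then
         (if ((i:ℕ)-1) % 2 = 0 then 1/(C:ℂ) else 1/(L:ℂ)) * v ⟨(i:ℕ)-1, by have := i.isLt; omega⟩
       else 0)
      + (if (i:ℕ) % 2 = 0 then -((R:ℂ)/L) else -((G:ℂ)/C)) * v i
      + (if h : (i:ℕ)+1 < 2*n+1 then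
           (if (i:ℕ)%2=0 then -(1/(L:ℂ)) else -(1/(C:ℂ))) * v ⟨(i:ℕ)+1, h⟩
         else 0) := by
  have key : ∀ j : Fin (2*n+1), lineMatrix R L G C n i j * v j =
      (if (j:ℕ)+1 = (i:ℕ) then (if ((i:ℕ)-1) % 2 = 0 then 1/(C:ℂ) else 1/(L:ℂ)) * v j else 0)
      + (if j = i then (if (i:ℕ)%2=0 then -((R:ℂ)/L) else -((G:ℂ)/C)) * v j else 0)
      + (if (j:ℕ) = (i:ℕ)+1 then (if (i:ℕ)%2=0 then -(1/(L:ℂ)) else -(1/(C:ℂ))) * v j else 0) := by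
    intro j
    simp only [lineMatrix, Matrix.of_apply, Fin.ext_iff]
    split_ifs <;> first
    | (exfalso; omega)
    | ring
  rw [Matrix.mulVec, dotProduct]
  simp only [key]
  rw [Finset.sum_add_distrib, Finset.sum_add_distrib]
  congr 1
  congr 1
  · by_cases h : 0 < (i:ℕ)
    · rw [dif_pos h, Finset.sum_eq_single (⟨(i:ℕ)-1, by have := i.isLt; omega⟩ : Fin (2*n+1))]
      · rw [if_pos (by simp only [Fin.val_mk]; omega)]
      · intro b _ hb
        rw [if_neg]
        intro hc
        exact hb (Fin.ext (by simp only [Fin.val_mk]; omega))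
      · intro hmem; exact absurd (Finset.mem_univ _) hmem
    · rw [dif_neg h]
      apply Finset.sum_eq_zero
      intro j _
      rw [if_neg (by omega)]
  · rw [Finset.sum_ite_eq' Finset.univ i, if_pos (Finset.mem_univ i)]
  · by_cases h : (i:ℕ)+1 < 2*n+1
    · rw [dif_pos h, Finset.sum_eq_single (⟨(i:ℕ)+1, h⟩ : Fin (2*n+1))]
      · rw [if_pos rfl]
      · intro b _ hb
        rw [if_neg]
        intro hc
        exact hb (Fin.ext (by simp only [Fin.val_mk]; omega))
      · intro hmem; exact absurd (Finset.mem_univ _) hmem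
    · rw [dif_neg h]
      apply Finset.sum_eq_zero
      intro j _
      rw [if_neg (by have := j.isLt; omega)]

noncomputable def uvec (α x : ℂ) (N : ℕ) : Fin N → ℂ := fun j => useq α x (j:ℕ)

lemma uvec_apply (α x : ℂ) (N : ℕ) (j : Fin N) : uvec α x N j = useq α x (j:ℕ) := rfl

theorem eigenvalue_iff_cos (R L G C : ℝ) (hR : 0 < R) (hL : 0 < L) (hG : 0 < G)
    (hC : 0 < C) (n : ℕ) (lam : ℂ) (hlam : lam ≠ -(R : ℂ) / L) :
    (∃ v : Fin (2 * n + 1) → ℂ, v ≠ 0 ∧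
        (lineMatrix R L G C n).mulVec v = lam • v) ↔
      ∃ k ∈ Finset.Icc 1 n,
        (1 / 2 : ℂ) * L * C * (lam + R / L) * (lam + G / C) + 1 =
          (Real.cos (k * Real.pi / (n + 1)) : ℂ) := by
  have hLc : (L:ℂ) ≠ 0 := Complex.ofReal_ne_zero.2 hL.ne'
  have hCc : (C:ℂ) ≠ 0 := Complex.ofReal_ne_zero.2 hC.ne'
  obtain ⟨α, hα⟩ : ∃ a : ℂ, a = (L:ℂ)*lam + R := ⟨_, rfl⟩
  obtain ⟨β, hβ⟩ : ∃ a : ℂ, a = (C:ℂ)*lam + G := ⟨_, rfl⟩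
  obtain ⟨x, hX⟩ : ∃ y : ℂ, y = α*β/2 + 1 := ⟨_, rfl⟩
  have hαne : α ≠ 0 := by
    intro h
    apply hlam
    rw [hα] at h
    field_simp
    linear_combination h
  have hx : α*β = 2*x-2 := by rw [hX]; ring
  have hxs : (1/2:ℂ)*L*C*(lam + R/L)*(lam + G/C) + 1 = x := by
    rw [hX, hα, hβ]; field_simp
  have hiff2 : (∃ k ∈ Finset.Icc 1 n,
      (1/2:ℂ)*L*C*(lam + R/L)*(lam + G/C) + 1 = (Real.cos (k*Real.pi/(n+1)) : ℂ)) ↔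
      Uev x n = 0 := by
    simp only [hxs]
    exact (Uev_eq_zero_iff n x).symm
  refine Iff.trans ?_ hiff2.symm
  rcases Nat.eq_zero_or_pos n with hn | hn
  · subst hn
    constructor
    · rintro ⟨v, hv0, hAv⟩
      exfalso
      have heq := congrFun hAv ⟨0, by omega⟩
      rw [lineMatrix_mulVec, Pi.smul_apply, smul_eq_mul] at heq
      simp only [Fin.val_mk] at heq
      rw [dif_neg (lt_irrefl 0), dif_neg (by omega : ¬ (0+1 < 2*0+1))] at heq
      simp only [if_true, Nat.zero_mod, reduceIte] at heq
      have hvz : v ⟨0, by omega⟩ ≠ 0 := by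
        intro h0
        apply hv0
        funext j
        have hj : j = ⟨0, by omega⟩ := by ext; have := j.isLt; simp only [Fin.val_mk]; omega
        rw [hj, h0]
        rfl
      apply hlam
      have h2 : (lam + (R:ℂ)/L) * v ⟨0, by omega⟩ = 0 := by linear_combination -heq
      rcases mul_eq_zero.1 h2 with h3 | h3
      · field_simp at h3 ⊢
        linear_combination h3
      · exact absurd h3 hvz
    · intro h
      rw [show ((0:ℕ):ℤ) = 0 from rfl, Uev_zero] at h
      exact absurd h one_ne_zero
  constructor
  · rintro ⟨v, hv0, hAv⟩
    have hrow : ∀ i : Fin (2*n+1),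
        (if h : 0 < (i:ℕ) then
           (if ((i:ℕ)-1) % 2 = 0 then 1/(C:ℂ) else 1/(L:ℂ)) * v ⟨(i:ℕ)-1, by have := i.isLt; omega⟩
         else 0)
        + (if (i:ℕ) % 2 = 0 then -((R:ℂ)/L) else -((G:ℂ)/C)) * v i
        + (if h : (i:ℕ)+1 < 2*n+1 then
             (if (i:ℕ)%2=0 then -(1/(L:ℂ)) else -(1/(C:ℂ))) * v ⟨(i:ℕ)+1, h⟩
           else 0) = lam * v i := by
      intro i
      have h1 := congrFun hAv i
      rw [lineMatrix_mulVec, Pi.smul_apply, smul_eq_mul] at h1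
      exact h1
    obtain ⟨w, hw⟩ : ∃ w : ℂ, w = v ⟨0, by omega⟩ := ⟨_, rfl⟩
    have hval : ∀ i, ∀ h : i < 2*n+1, v ⟨i, h⟩ = w * useq α x i := by
      intro i
      induction i using Nat.twoStepInduction with
      | zero =>
        intro h
        rw [useq_zero, mul_one, hw]
      | one =>
        intro h
        have heq := hrow ⟨0, by omega⟩
        simp only [Fin.val_mk] at heq
        rw [dif_neg (lt_irrefl 0), dif_pos (by omega : 0+1 < 2*n+1)] at heq
        simp only [if_true, Nat.zero_mod, reduceIte] at heq
        rw [row_first L R hLc] at heq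
        rw [vcongr v (0+1) (by omega) (by omega), heq, useq_one, hw, hα]
        ring
      | more m ih1 ih2 =>
        intro h
        have heq := hrow ⟨m+1, by omega⟩
        simp only [Fin.val_mk] at heq
        rw [dif_pos (Nat.succ_pos m), dif_pos (by omega : (m+1)+1 < 2*n+1)] at heq
        rw [vcongr v m (by omega) (by omega : m+1-1 = m)] at heq
        obtain ⟨t, rfl | rfl⟩ : ∃ t, m = 2*t ∨ m = 2*t+1 := ⟨m/2, by omega⟩
        · -- row 2t+1, odd
          rw [if_pos (by omega : ((2*t+1)-1) % 2 = 0), if_neg (by omega : ¬ ((2*t+1) % 2 = 0)),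
            if_neg (by omega : ¬ ((2*t+1) % 2 = 0))] at heq
          rw [row_solve C G hCc] at heq
          rw [ih1 (by omega), ih2 (by omega)] at heq
          rw [vcongr v (2*t+2) (by omega) (by omega : 2*t+1+1 = 2*t+2)] at heq
          rw [vcongr v (2*t+2) (by omega) (by omega : 2*t+2 = 2*t+2), heq,
            useq_rec_even α β x hx t, hβ]
          ring
        · -- row 2t+2, even interior
          rw [if_neg (by omega : ¬ (((2*t+1+1)-1) % 2 = 0)),
            if_pos (by omega : (2*t+1+1) % 2 = 0), if_pos (by omega : (2*t+1+1) % 2 = 0)] at heq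
          rw [row_solve L R hLc] at heq
          rw [ih1 (by omega), ih2 (by omega)] at heq
          rw [vcongr v (2*t+3) (by omega) (by omega : 2*t+1+1+1 = 2*t+3)] at heq
          rw [vcongr v (2*t+3) (by omega) (by omega : 2*t+1+2 = 2*t+3), heq]
          rw [show useq α x (2*t+1+2) = useq α x (2*t+3) from by rw [show 2*t+1+2 = 2*t+3 from by omega],
            useq_rec_odd α x t,
            show useq α x (2*t+1+1) = useq α x (2*t+2) from by rw [show 2*t+1+1 = 2*t+2 from by omega],
            hα]
          ring
    have hwne : w ≠ 0 := by
      intro h0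
      apply hv0
      funext j
      have hj := hval (j:ℕ) j.isLt
      rw [Fin.eta] at hj
      rw [hj, h0, zero_mul]
      rfl
    obtain ⟨t, rfl⟩ : ∃ t, n = t+1 := ⟨n-1, by omega⟩
    have heq := hrow ⟨2*(t+1), by omega⟩
    simp only [Fin.val_mk] at heq
    rw [dif_pos (by omega : 0 < 2*(t+1)), dif_neg (by omega : ¬ (2*(t+1)+1 < 2*(t+1)+1)),
      if_neg (by omega : ¬ ((2*(t+1)-1) % 2 = 0)), if_pos (by omega : (2*(t+1)) % 2 = 0)] at heq
    rw [row_last L R hLc] at heq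
    rw [hval (2*(t+1)-1) (by omega), hval (2*(t+1)) (by omega)] at heq
    rw [show useq α x (2*(t+1)-1) = useq α x (2*t+1) from by rw [show 2*(t+1)-1 = 2*t+1 from by omega],
      useq_odd, useq_even,
      show ((t+1:ℕ):ℤ)-1 = (t:ℤ) from by push_cast; ring] at heq
    have hkey : α * (w * Uev x ((t+1:ℕ):ℤ)) = 0 := by
      linear_combination -heq + (w * Uev x ((t+1:ℕ):ℤ) - w * Uev x (t:ℤ)) * hα
    rcases mul_eq_zero.1 hkey with h1 | h1
    · exact absurd h1 hαne
    rcases mul_eq_zero.1 h1 with h1 | h1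
    · exact absurd h1 hwne
    · exact h1
  · intro hUn
    refine ⟨uvec α x (2*n+1), ?_, ?_⟩
    · intro h0
      have := congrFun h0 ⟨0, by omega⟩
      rw [uvec_apply] at this
      simp only [Fin.val_mk] at this
      rw [useq_zero] at this
      exact one_ne_zero this
    · funext i
      rw [lineMatrix_mulVec, Pi.smul_apply, smul_eq_mul]
      rcases i with ⟨m, hm⟩
      simp only [Fin.val_mk, uvec_apply]
      obtain ⟨t, rfl | rfl⟩ : ∃ t, m = 2*t ∨ m = 2*t+1 := ⟨m/2, by omega⟩
      · rcases Nat.eq_zero_or_pos t with rfl | ht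
        · -- first row
          rw [dif_neg (by omega : ¬ (0 < 2*0)), dif_pos (by omega : 2*0+1 < 2*n+1)]
          simp only [if_true, Nat.mul_mod_right, reduceIte]
          rw [row_first L R hLc]
          rw [show (2*0 : ℕ) = 0 from rfl, show (0+1 : ℕ) = 1 from rfl, useq_zero, useq_one, hα]
          ring
        · by_cases hlast : 2*t+1 < 2*n+1
          · -- even interior row, t ≥ 1
            obtain ⟨s, rfl⟩ : ∃ s, t = s+1 := ⟨t-1, by omega⟩
            rw [dif_pos (by omega : 0 < 2*(s+1)), dif_pos (by omega : 2*(s+1)+1 < 2*n+1),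
              if_neg (by omega : ¬ ((2*(s+1)-1) % 2 = 0)),
              if_pos (by omega : (2*(s+1)) % 2 = 0), if_pos (by omega : (2*(s+1)) % 2 = 0)]
            rw [row_solve L R hLc]
            rw [show useq α x (2*(s+1)-1) = useq α x (2*s+1) from by rw [show 2*(s+1)-1 = 2*s+1 from by omega],
              show useq α x (2*(s+1)+1) = useq α x (2*s+3) from by rw [show 2*(s+1)+1 = 2*s+3 from by omega],
              show useq α x (2*(s+1)) = useq α x (2*s+2) from by rw [show 2*(s+1) = 2*s+2 from by omega],
              useq_rec_odd α x s, hα]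
            try ring
          · -- last row: 2*t = 2*n
            obtain ⟨s, rfl⟩ : ∃ s, t = s+1 := ⟨t-1, by omega⟩
            have hts : s+1 = n := by omega
            rw [dif_pos (by omega : 0 < 2*(s+1)), dif_neg hlast,
              if_neg (by omega : ¬ ((2*(s+1)-1) % 2 = 0)),
              if_pos (by omega : (2*(s+1)) % 2 = 0)]
            rw [row_last L R hLc]
            rw [show useq α x (2*(s+1)-1) = useq α x (2*s+1) from by rw [show 2*(s+1)-1 = 2*s+1 from by omega],
              useq_odd, useq_even,
              show ((s+1:ℕ):ℤ)-1 = (s:ℤ) from by push_cast; ring]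
            have hUn' : Uev x ((s+1:ℕ):ℤ) = 0 := by rw [hts]; exact hUn
            rw [hUn', hα]
            ring
      · -- odd row 2t+1
        rw [dif_pos (by omega : 0 < 2*t+1), dif_pos (by omega : 2*t+1+1 < 2*n+1),
          if_pos (by omega : ((2*t+1)-1) % 2 = 0),
          if_neg (by omega : ¬ ((2*t+1) % 2 = 0)), if_neg (by omega : ¬ ((2*t+1) % 2 = 0))]
        rw [row_solve C G hCc]
        rw [show useq α x (2*t+1-1) = useq α x (2*t) from by rw [show 2*t+1-1 = 2*t from by omega],
          show useq α x (2*t+1+1) = useq α x (2*t+2) from by rw [show 2*t+1+1 = 2*t+2 from by omega],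
          useq_rec_even α β x hx t, hβ]
        try ring
end

section
/- Define P_n(μ) = (1/(LC))ⁿ·U_n((1/2)LC·μ + 1) with U_n the Chebyshev polynomial of the second kind, and g(λ) = (λ+R/L)(λ+G/C). Then the closed-loop characteristic polynomial under a proportional voltage controller with gain k_V, obtained by modifying the (2n+1, 2n) entry of the state matrix from 1/L to (1+k_V)/L, equals (λ + R/L)·(P_n(g(λ)) + (k_V/(LC))·P_{n−1}(g(λ))). -/
/-- Closed-loop state matrix under a proportional voltage controller with gain `kV`:
the `(2n+1, 2n)` entry (1-indexed), i.e. `(2n, 2n-1)` in 0-indexing, becomes `(1+kV)/L`. -/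
noncomputable def closedLoopV (R L G C kV : ℝ) (n : ℕ) :
    Matrix (Fin (2 * n + 1)) (Fin (2 * n + 1)) ℂ :=
  Matrix.of fun i j =>
    if (i : ℕ) = 2 * n ∧ (j : ℕ) = 2 * n - 1 then (1 + (kV : ℂ)) / L
    else lineMatrix R L G C n i j



noncomputable def trid (d u l : ℕ → ℂ) (m : ℕ) : Matrix (Fin m) (Fin m) ℂ :=
  Matrix.of fun i j =>
    if (i : ℕ) = (j : ℕ) then d i
    else if (j : ℕ) = (i : ℕ) + 1 then u i
    else if (i : ℕ) = (j : ℕ) + 1 then l j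
    else 0

lemma val_succAbove {m : ℕ} (p : Fin (m + 1)) (i : Fin m) :
    ((p.succAbove i : Fin (m + 1)) : ℕ) = if (i : ℕ) < (p : ℕ) then (i : ℕ) else (i : ℕ) + 1 := by
  unfold Fin.succAbove
  split_ifs with h1 h2 h2 <;>
    simp_all [Fin.lt_def, Fin.val_succ, Fin.coe_castSucc]

lemma trid_submatrix (d u l : ℕ → ℂ) {m₁ m₂ : ℕ} (f g : Fin m₁ → Fin m₂)
    (hf : ∀ i, ((f i : Fin m₂) : ℕ) = (i : ℕ)) (hg : ∀ i, ((g i : Fin m₂) : ℕ) = (i : ℕ)) :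
    (trid d u l m₂).submatrix f g = trid d u l m₁ := by
  ext i j
  simp [trid, Matrix.submatrix_apply, hf, hg]

lemma trid_det (d u l : ℕ → ℂ) (m : ℕ) :
    (trid d u l (m + 2)).det
      = d (m + 1) * (trid d u l (m + 1)).det - u m * l m * (trid d u l m).det := by
  rw [Matrix.det_succ_row _ (Fin.last (m + 1))]
  rw [Fin.sum_univ_castSucc, Fin.sum_univ_castSucc]
  have hz : ∀ j : Fin m,
      (trid d u l (m + 2)) (Fin.last (m + 1)) (Fin.castSucc (Fin.castSucc j)) = 0 := by
    intro j
    have := j.isLt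
    simp only [trid, Matrix.of_apply, Fin.val_last, Fin.coe_castSucc]
    split_ifs <;> first | rfl | omega
  rw [Finset.sum_eq_zero (fun j _ => by rw [hz]; ring)]
  have e1 : (trid d u l (m + 2)) (Fin.last (m + 1)) (Fin.castSucc (Fin.last m)) = l m := by
    simp only [trid, Matrix.of_apply, Fin.val_last, Fin.coe_castSucc]
    split_ifs <;> first | rfl | omega
  have e2 : (trid d u l (m + 2)) (Fin.last (m + 1)) (Fin.last (m + 1)) = d (m + 1) := by
    simp only [trid, Matrix.of_apply, Fin.val_last]
    split_ifs <;> first | rfl | omega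
  have m2 : (trid d u l (m + 2)).submatrix (Fin.last (m + 1)).succAbove
      (Fin.last (m + 1)).succAbove = trid d u l (m + 1) := by
    apply trid_submatrix
    all_goals intro i; rw [val_succAbove]; simp [Fin.val_last, i.isLt]
  have m1 : ((trid d u l (m + 2)).submatrix (Fin.last (m + 1)).succAbove
      (Fin.castSucc (Fin.last m)).succAbove).det = u m * (trid d u l m).det := by
    set M := (trid d u l (m + 2)).submatrix (Fin.last (m + 1)).succAbove
      (Fin.castSucc (Fin.last m)).succAbove with hM
    have col : ∀ i : Fin (m + 1),
        M i (Fin.last m) = if (i : ℕ) = m then u m else 0 := by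
      intro i
      have hi := i.isLt
      have hrow : (((Fin.last (m + 1)).succAbove i : Fin (m+2)) : ℕ) = (i : ℕ) := by
        rw [val_succAbove, if_pos (by simp only [Fin.val_last]; omega)]
      have hcol : (((Fin.castSucc (Fin.last m)).succAbove (Fin.last m) : Fin (m+2)) : ℕ)
          = m + 1 := by
        rw [val_succAbove]; simp [Fin.val_last, Fin.coe_castSucc]
      simp only [hM, Matrix.submatrix_apply, trid, Matrix.of_apply, hrow, hcol]
      rcases eq_or_ne (i : ℕ) m with h | h
      · rw [if_neg (by omega), if_pos (by omega), if_pos h, h]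
      · rw [if_neg (by omega), if_neg (by omega), if_neg (by omega), if_neg h]
    rw [Matrix.det_succ_column M (Fin.last m)]
    rw [Fin.sum_univ_castSucc]
    have hz2 : ∀ i : Fin m, M (Fin.castSucc i) (Fin.last m) = 0 := by
      intro i
      rw [col]
      rw [if_neg (by simpa using Nat.ne_of_lt i.isLt)]
    rw [Finset.sum_eq_zero (fun i _ => by rw [hz2]; ring), zero_add]
    have hlast : M (Fin.last m) (Fin.last m) = u m := by rw [col, if_pos (by simp)]
    have hmin : M.submatrix (Fin.last m).succAbove (Fin.last m).succAbove = trid d u l m := by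
      rw [hM, Matrix.submatrix_submatrix]
      apply trid_submatrix
      · intro i
        have hi := i.isLt
        have h1 : (((Fin.last m).succAbove i : Fin (m+1)) : ℕ) = (i : ℕ) := by
          rw [val_succAbove, if_pos (by simp only [Fin.val_last]; omega)]
        simp only [Function.comp_apply]
        rw [val_succAbove, h1, if_pos (by simp only [Fin.val_last]; omega)]
      · intro i
        have hi := i.isLt
        have h1 : (((Fin.last m).succAbove i : Fin (m+1)) : ℕ) = (i : ℕ) := by
          rw [val_succAbove, if_pos (by simp only [Fin.val_last]; omega)]
        simp only [Function.comp_apply]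
        rw [val_succAbove, h1, if_pos (by simp only [Fin.val_last, Fin.coe_castSucc]; omega)]
    rw [hlast, hmin]
    have : ((-1 : ℂ)) ^ (((Fin.last m : Fin (m+1)) : ℕ) + ((Fin.last m : Fin (m+1)) : ℕ)) = 1 := by
      simp only [Fin.val_last]
      exact Even.neg_one_pow ⟨m, by ring⟩
    rw [this]; ring
  rw [e1, e2, m1, m2]
  have s1 : ((-1 : ℂ)) ^ (((Fin.last (m+1) : Fin (m+2)) : ℕ)
      + ((Fin.castSucc (Fin.last m) : Fin (m+2)) : ℕ)) = -1 := by
    simp only [Fin.val_last, Fin.coe_castSucc]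
    exact Odd.neg_one_pow ⟨m, by ring⟩
  have s2 : ((-1 : ℂ)) ^ (((Fin.last (m+1) : Fin (m+2)) : ℕ)
      + ((Fin.last (m+1) : Fin (m+2)) : ℕ)) = 1 := by
    simp only [Fin.val_last]
    exact Even.neg_one_pow ⟨m + 1, by ring⟩
  rw [s1, s2]; ring

lemma Pseq_zero (L C : ℝ) (μ : ℂ) : Pseq L C 0 μ = 1 := by
  simp [Pseq, Polynomial.Chebyshev.U_zero]

lemma Pseq_one (L C : ℝ) (hL : (L:ℂ) ≠ 0) (hC : (C:ℂ) ≠ 0) (μ : ℂ) :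
    Pseq L C 1 μ = μ + 2 * (1 / ((L : ℂ) * C)) := by
  simp only [Pseq, Nat.cast_one, Polynomial.Chebyshev.U_one, pow_one]
  rw [Polynomial.eval_mul, Polynomial.eval_ofNat, Polynomial.eval_X]
  field_simp

lemma Pseq_rec (L C : ℝ) (hL : (L:ℂ) ≠ 0) (hC : (C:ℂ) ≠ 0) (k : ℕ) (μ : ℂ) :
    Pseq L C (k + 2) μ = (μ + 2 * (1 / ((L : ℂ) * C))) * Pseq L C (k + 1) μ
      - (1 / ((L : ℂ) * C)) ^ 2 * Pseq L C k μ := by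
  have h := Polynomial.Chebyshev.U_add_two ℂ (k : ℤ)
  simp only [Pseq]
  push_cast
  rw [h]
  simp only [Polynomial.eval_sub, Polynomial.eval_mul, Polynomial.eval_ofNat, Polynomial.eval_X]
  simp only [one_div, mul_inv, mul_pow, inv_pow]
  field_simp
  ring

theorem closedLoop_charpoly_voltage (R L G C kV : ℝ) (hR : 0 < R) (hL : 0 < L)
    (hG : 0 < G) (hC : 0 < C) (hkV : 0 < kV) (n : ℕ) (hn : 1 ≤ n) (lam : ℂ) :
    (closedLoopV R L G C kV n).charpoly.eval lam =
      (lam + R / L) * (Pseq L C n (gfun R L G C lam)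
        + ((kV : ℂ) / ((L : ℂ) * C)) * Pseq L C (n - 1) (gfun R L G C lam)) := by
  have hLC : (L : ℂ) ≠ 0 := Complex.ofReal_ne_zero.mpr hL.ne'
  have hCC : (C : ℂ) ≠ 0 := Complex.ofReal_ne_zero.mpr hC.ne'
  set q : ℂ := 1 / ((L : ℂ) * C) with hq
  set a : ℂ := lam + R / L with ha
  set b : ℂ := lam + G / C with hb
  set g : ℂ := gfun R L G C lam with hg
  have hgab : g = a * b := rfl
  set d : ℕ → ℂ := fun i => if i % 2 = 0 then a else b with hd
  set u : ℕ → ℂ := fun i => if i % 2 = 0 then 1 / (L : ℂ) else 1 / (C : ℂ) with hu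
  set l : ℕ → ℂ := fun j => if j = 2 * n - 1 then -((1 + (kV : ℂ)) / L)
    else if j % 2 = 0 then -(1 / (C : ℂ)) else -(1 / (L : ℂ)) with hl
  -- characteristic polynomial evaluation as a tridiagonal determinant
  have hmat : (Matrix.charmatrix (closedLoopV R L G C kV n)).map (Polynomial.evalRingHom lam)
      = trid d u l (2 * n + 1) := by
    ext i j
    have hi := i.isLt
    have hj := j.isLt
    by_cases hij : i = j
    · subst hij
      rw [Matrix.map_apply, Matrix.charmatrix_apply_eq]
      simp only [Polynomial.coe_evalRingHom, Polynomial.eval_sub, Polynomial.eval_X,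
        Polynomial.eval_C, closedLoopV, lineMatrix, trid, Matrix.of_apply, hd, hu, hl]
      split_ifs <;> first | ring1 | (exfalso; omega) | (rw [ha]; ring1) | (rw [hb]; ring1)
    · rw [Matrix.map_apply, Matrix.charmatrix_apply_ne _ _ _ hij]
      have hijv : (i : ℕ) ≠ (j : ℕ) := fun h => hij (Fin.ext h)
      simp only [Polynomial.coe_evalRingHom, Polynomial.eval_neg, Polynomial.eval_C,
        closedLoopV, lineMatrix, trid, Matrix.of_apply, hd, hu, hl]
      split_ifs <;> first | ring1 | (exfalso; omega)
  have h1 : (closedLoopV R L G C kV n).charpoly.eval lam = (trid d u l (2 * n + 1)).det := by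
    rw [Matrix.charpoly,
      show (Matrix.charmatrix (closedLoopV R L G C kV n)).det.eval lam
        = (Polynomial.evalRingHom lam) (Matrix.charmatrix (closedLoopV R L G C kV n)).det from rfl,
      RingHom.map_det, RingHom.mapMatrix_apply, hmat]
  -- the two-step induction
  have key : ∀ k : ℕ, k + 1 ≤ n →
      (trid d u l (2 * k + 1)).det = a * Pseq L C k g ∧
      (trid d u l (2 * k + 2)).det = Pseq L C (k + 1) g - q * Pseq L C k g := by
    intro k
    induction k with
    | zero =>
      intro _
      constructor
      · rw [Matrix.det_fin_one, Pseq_zero]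
        simp only [trid, Matrix.of_apply, hd]
        norm_num
      · rw [Matrix.det_fin_two, Pseq_one L C hLC hCC, Pseq_zero]
        have h0 : ¬(0 : ℕ) = 2 * n - 1 := by omega
        have e00 : (trid d u l 2) 0 1 = 1 / (L : ℂ) := by
          simp [trid, hu]
        have e10 : (trid d u l 2) 1 0 = -(1 / (C : ℂ)) := by
          simp [trid, hl, h0]
        have e0 : (trid d u l 2) 0 0 = a := by
          simp [trid, hd]
        have e1 : (trid d u l 2) 1 1 = b := by
          simp [trid, hd]
        rw [e00, e10, e0, e1, hgab, hq]
        field_simp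
        ring
    | succ k ih =>
      intro hk
      obtain ⟨ih1, ih2⟩ := ih (by omega)
      have hd2 : d (2 * k + 2) = a := by simp only [hd]; rw [if_pos (by omega)]
      have hd3 : d (2 * k + 3) = b := by simp only [hd]; rw [if_neg (by omega)]
      have hu1 : u (2 * k + 1) = 1 / (C : ℂ) := by simp only [hu]; rw [if_neg (by omega)]
      have hu2 : u (2 * k + 2) = 1 / (L : ℂ) := by simp only [hu]; rw [if_pos (by omega)]
      have hl1 : l (2 * k + 1) = -(1 / (L : ℂ)) := by
        simp only [hl]; rw [if_neg (by omega), if_neg (by omega)]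
      have hl2 : l (2 * k + 2) = -(1 / (C : ℂ)) := by
        simp only [hl]; rw [if_neg (by omega), if_pos (by omega)]
      have r1 : (trid d u l (2 * (k + 1) + 1)).det = a * Pseq L C (k + 1) g := by
        rw [show 2 * (k + 1) + 1 = (2 * k + 1) + 2 by ring, trid_det, hd2, hu1, hl1,
          show 2 * k + 1 + 1 = 2 * k + 2 by ring, ih1, ih2, hq]
        field_simp
        ring
      refine ⟨r1, ?_⟩
      rw [show 2 * (k + 1) + 2 = (2 * k + 2) + 2 by ring, trid_det, hd3, hu2, hl2,
        show 2 * k + 2 + 1 = 2 * (k + 1) + 1 by ring, r1, ih2,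
        Pseq_rec L C hLC hCC k g, hgab, hq]
      field_simp
      ring
  -- conclude
  obtain ⟨m, rfl⟩ : ∃ m, n = m + 1 := ⟨n - 1, by omega⟩
  obtain ⟨k1, k2⟩ := key m le_rfl
  have hdm : d (2 * m + 2) = a := by simp only [hd]; rw [if_pos (by omega)]
  have hum : u (2 * m + 1) = 1 / (C : ℂ) := by simp only [hu]; rw [if_neg (by omega)]
  have hlm : l (2 * m + 1) = -((1 + (kV : ℂ)) / L) := by
    simp only [hl]; rw [if_pos (by omega)]
  rw [h1, show 2 * (m + 1) + 1 = (2 * m + 1) + 2 by ring, trid_det, hdm, hum, hlm,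
    show 2 * m + 1 + 1 = 2 * m + 2 by ring, k1, k2,
    show m + 1 - 1 = m from rfl, hq]
  field_simp
  ring
end

section
/- With the closed-loop characteristic polynomial (λ + R/L)·(P_n(g(λ)) + (k_V/(LC))·P_{n−1}(g(λ))), a complex number λ ≠ −R/L with (1/2)LC·g(λ) + 1 = cos(θ) for θ ∈ (0,π) is a root if and only if sin((n+1)θ) + k_V·sin(nθ) = 0. -/
theorem closedLoop_root_iff_trig (R L G C kV : ℝ) (hR : 0 < R) (hL : 0 < L)
    (hG : 0 < G) (hC : 0 < C) (n : ℕ) (hn : 1 ≤ n) (lam : ℂ)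
    (hlam : lam ≠ -(R : ℂ) / L) (θ : ℝ) (hθ : θ ∈ Set.Ioo 0 Real.pi)
    (hcos : (1 / 2 : ℂ) * L * C * gfun R L G C lam + 1 = (Real.cos θ : ℂ)) :
    (lam + R / L) * (Pseq L C n (gfun R L G C lam)
        + ((kV : ℂ) / ((L : ℂ) * C)) * Pseq L C (n - 1) (gfun R L G C lam)) = 0 ↔
      Real.sin ((n + 1) * θ) + kV * Real.sin (n * θ) = 0 := by
  have hLC : ((L : ℂ) * C) ≠ 0 := by
    exact_mod_cast mul_ne_zero (by exact_mod_cast hL.ne') (by exact_mod_cast hC.ne')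
  have ha : lam + (R : ℂ) / L ≠ 0 := by
    intro h
    exact hlam (by rw [neg_div]; exact eq_neg_of_add_eq_zero_left h)
  have hs : 0 < Real.sin θ := Real.sin_pos_of_pos_of_lt_pi hθ.1 hθ.2
  have hsC : ((Real.sin θ : ℝ) : ℂ) ≠ 0 := by exact_mod_cast hs.ne'
  have hpow : (1 / ((L : ℂ) * C)) ^ n ≠ 0 := pow_ne_zero _ (one_div_ne_zero hLC)
  have hUn : ∀ m : ℕ, (Polynomial.Chebyshev.U ℂ (m : ℤ)).eval
      ((1 / 2 : ℂ) * L * C * gfun R L G C lam + 1) * (Real.sin θ : ℂ)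
      = ((Real.sin ((m + 1) * θ) : ℝ) : ℂ) := by
    intro m
    rw [hcos, Complex.ofReal_cos, Complex.ofReal_sin,
      Polynomial.Chebyshev.U_complex_cos, Complex.ofReal_sin]
    push_cast
    ring_nf
  have key : (Pseq L C n (gfun R L G C lam)
        + ((kV : ℂ) / ((L : ℂ) * C)) * Pseq L C (n - 1) (gfun R L G C lam))
        * (Real.sin θ : ℂ)
      = (1 / ((L : ℂ) * C)) ^ n
        * (((Real.sin ((n + 1) * θ) : ℝ) : ℂ) + kV * ((Real.sin (n * θ) : ℝ) : ℂ)) := by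
    unfold Pseq
    have h1 := hUn n
    have h2 := hUn (n - 1)
    have hn1 : ((n - 1 : ℕ) : ℝ) + 1 = (n : ℝ) := by
      have : (n - 1) + 1 = n := Nat.succ_pred_eq_of_pos hn
      exact_mod_cast congrArg (Nat.cast (R := ℝ)) this
    rw [hn1] at h2
    have hpow2 : (1 / ((L : ℂ) * C)) ^ (n - 1) * (1 / ((L : ℂ) * C))
        = (1 / ((L : ℂ) * C)) ^ n := by
      rw [← pow_succ]; congr 1; omega
    linear_combination (1 / ((L : ℂ) * C)) ^ n * h1
      + (kV : ℂ) / ((L : ℂ) * C) * (1 / ((L : ℂ) * C)) ^ (n - 1) * h2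
      + (kV : ℂ) * ((Real.sin (n * θ) : ℝ) : ℂ) * hpow2
  constructor
  · intro h
    rcases mul_eq_zero.mp h with h | h
    · exact absurd h ha
    · have : (Pseq L C n (gfun R L G C lam)
          + ((kV : ℂ) / ((L : ℂ) * C)) * Pseq L C (n - 1) (gfun R L G C lam))
          * (Real.sin θ : ℂ) = 0 := by rw [h, zero_mul]
      rw [key] at this
      have h3 : ((Real.sin ((n + 1) * θ) : ℝ) : ℂ) + kV * ((Real.sin (n * θ) : ℝ) : ℂ) = 0 :=
        (mul_eq_zero.mp this).resolve_left hpow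
      exact_mod_cast h3
  · intro h
    have h3 : ((Real.sin ((n + 1) * θ) : ℝ) : ℂ) + kV * ((Real.sin (n * θ) : ℝ) : ℂ) = 0 := by
      exact_mod_cast h
    have : (Pseq L C n (gfun R L G C lam)
          + ((kV : ℂ) / ((L : ℂ) * C)) * Pseq L C (n - 1) (gfun R L G C lam))
          * (Real.sin θ : ℂ) = 0 := by rw [key, h3, mul_zero]
    rcases mul_eq_zero.mp this with h | h
    · rw [h, mul_zero]
    · exact absurd h hsC
end
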